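/- arXiv:1008.1623 — 2 statements merged into one kernel-verified Lean document; each statement's English description precedes it below -/
import Mathlib

section
/- Let x : [0,T] → ℝ² be a continuous, piecewise C¹ curve with ‖x'(t)‖ = 1. Suppose between any two consecutive transversal crossings of an integer line (horizontal for the second coordinate, vertical for the first coordinate) the corresponding coordinate has total variation at least 1. Let N be the total number of times x₁(t) ∈ ℤ plus the number of times x₂(t) ∈ ℤ (all crossings transversal, finitely many). Then N ≤ √2 · T + 2. -/
open Set intervalIntegral

private lemma key_count (g : ℝ → ℝ) (hg0 : ∀ t, 0 ≤ g t) :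
    ∀ (n : ℕ) (s : Finset ℝ), s.card = n → ∀ A B : ℝ, A ≤ B →
      MeasureTheory.IntegrableOn g (Set.Icc A B) → (↑s ⊆ Set.Icc A B) →
      (∀ τ₁ ∈ s, ∀ τ₂ ∈ s, τ₁ < τ₂ → (∀ t ∈ s, ¬(τ₁ < t ∧ t < τ₂)) →
        1 ≤ ∫ t in τ₁..τ₂, g t) →
      (s.card : ℝ) - 1 ≤ ∫ t in A..B, g t := by
  intro n
  induction n with
  | zero =>
    intro s hcard A B hAB hint hsub hvar
    have h0 : (0:ℝ) ≤ ∫ t in A..B, g t :=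
      intervalIntegral.integral_nonneg hAB (fun u _ => hg0 u)
    simp only [hcard]
    push_cast
    linarith
  | succ n ih =>
    intro s hcard A B hAB hint hsub hvar
    have hne : s.Nonempty := Finset.card_pos.mp (by omega)
    rcases Nat.eq_zero_or_pos n with hn | hn
    · have h0 : (0:ℝ) ≤ ∫ t in A..B, g t :=
        intervalIntegral.integral_nonneg hAB (fun u _ => hg0 u)
      simp only [hcard, hn]
      push_cast
      linarith
    · set a := s.min' hne with ha
      have ha_mem : a ∈ s := s.min'_mem hne
      set s' := s.erase a with hs'
      have hcard' : s'.card = n := by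
        rw [hs', Finset.card_erase_of_mem ha_mem, hcard]; omega
      have hne' : s'.Nonempty := Finset.card_pos.mp (by omega)
      set b := s'.min' hne' with hb
      have hb_mem' : b ∈ s' := s'.min'_mem hne'
      have hb_mem : b ∈ s := Finset.mem_of_mem_erase hb_mem'
      have hab : a < b := by
        have h1 : a ≤ b := s.min'_le b hb_mem
        have h2 : b ≠ a := (Finset.mem_erase.mp hb_mem').1
        exact lt_of_le_of_ne h1 (Ne.symm h2)
      have hno : ∀ t ∈ s, ¬(a < t ∧ t < b) := by
        intro t ht ⟨h1, h2⟩
        have : t ∈ s' := Finset.mem_erase.mpr ⟨ne_of_gt h1, ht⟩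
        exact absurd (s'.min'_le t this) (not_le.mpr h2)
      have h1 : 1 ≤ ∫ t in a..b, g t := hvar a ha_mem b hb_mem hab hno
      have hAa : A ≤ a := (hsub ha_mem).1
      have hbB : b ≤ B := (hsub hb_mem).2
      have hAb : A ≤ b := hAa.trans hab.le
      -- subinterval integrability
      have I_Ab : IntervalIntegrable g MeasureTheory.volume A b :=
        (hint.mono_set (by rw [Set.uIcc_of_le hAb]; exact Set.Icc_subset_Icc le_rfl hbB)).intervalIntegrable
      have I_bB : IntervalIntegrable g MeasureTheory.volume b B :=
        (hint.mono_set (by rw [Set.uIcc_of_le hbB]; exact Set.Icc_subset_Icc hAb le_rfl)).intervalIntegrable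
      have I_Aa : IntervalIntegrable g MeasureTheory.volume A a :=
        (hint.mono_set (by rw [Set.uIcc_of_le hAa]; exact Set.Icc_subset_Icc le_rfl ((hsub ha_mem).2))).intervalIntegrable
      have I_ab : IntervalIntegrable g MeasureTheory.volume a b :=
        (hint.mono_set (by rw [Set.uIcc_of_le hab.le]; exact Set.Icc_subset_Icc hAa hbB)).intervalIntegrable
      -- IH on s'
      have hsub' : ↑s' ⊆ Set.Icc b B := by
        intro t ht
        exact ⟨s'.min'_le t ht, (hsub (Finset.mem_of_mem_erase ht)).2⟩
      have hvar' : ∀ τ₁ ∈ s', ∀ τ₂ ∈ s', τ₁ < τ₂ → (∀ t ∈ s', ¬(τ₁ < t ∧ t < τ₂)) →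
          1 ≤ ∫ t in τ₁..τ₂, g t := by
        intro τ₁ h₁ τ₂ h₂ hlt hno'
        refine hvar τ₁ (Finset.mem_of_mem_erase h₁) τ₂ (Finset.mem_of_mem_erase h₂) hlt ?_
        intro t ht hbet
        by_cases hta : t = a
        · have : a ≤ τ₁ := s.min'_le τ₁ (Finset.mem_of_mem_erase h₁)
          exact absurd hbet.1 (not_lt.mpr (hta ▸ this))
        · exact hno' t (Finset.mem_erase.mpr ⟨hta, ht⟩) hbet
      have IH : (s'.card : ℝ) - 1 ≤ ∫ t in b..B, g t :=
        ih s' hcard' b B hbB (hint.mono_set (Set.Icc_subset_Icc hAb le_rfl)) hsub' hvar'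
      -- combine
      have hsplit : ∫ t in A..B, g t = (∫ t in A..b, g t) + ∫ t in b..B, g t :=
        (intervalIntegral.integral_add_adjacent_intervals I_Ab I_bB).symm
      have hsplit2 : ∫ t in A..b, g t = (∫ t in A..a, g t) + ∫ t in a..b, g t :=
        (intervalIntegral.integral_add_adjacent_intervals I_Aa I_ab).symm
      have hAa0 : (0:ℝ) ≤ ∫ t in A..a, g t :=
        intervalIntegral.integral_nonneg hAa (fun u _ => hg0 u)
      rw [hcard'] at IH
      rw [hsplit, hsplit2, hcard]
      push_cast at IH ⊢
      linarith

/-- If a unit-speed piecewise-C¹ planar curve on `[0,T]` has finitely many (transversal)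
crossings of integer lines in each coordinate, and between any two consecutive crossings
in a given coordinate the total variation of that coordinate is at least 1, then the
total number of crossings `N` satisfies `N ≤ √2·T + 2`. -/
theorem stmt1 (T : ℝ) (hT : 0 < T) (x x' : ℝ → ℝ × ℝ)
    (hderiv : ∀ t ∈ Set.Icc 0 T, HasDerivAt x (x' t) t)
    (hunit : ∀ t ∈ Set.Icc 0 T,
      Real.sqrt ((x' t).1 ^ 2 + (x' t).2 ^ 2) = 1)
    (s₁ s₂ : Finset ℝ)
    (hs₁ : ∀ t ∈ Set.Icc 0 T, ((x t).1 ∈ Set.range ((↑) : ℤ → ℝ) ↔ t ∈ s₁))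
    (hs₂ : ∀ t ∈ Set.Icc 0 T, ((x t).2 ∈ Set.range ((↑) : ℤ → ℝ) ↔ t ∈ s₂))
    (hsub₁ : ↑s₁ ⊆ Set.Icc 0 T) (hsub₂ : ↑s₂ ⊆ Set.Icc 0 T)
    (hvar₁ : ∀ τ₁ ∈ s₁, ∀ τ₂ ∈ s₁, τ₁ < τ₂ →
      (∀ t ∈ s₁, ¬(τ₁ < t ∧ t < τ₂)) → 1 ≤ ∫ t in τ₁..τ₂, |(x' t).1|)
    (hvar₂ : ∀ τ₁ ∈ s₂, ∀ τ₂ ∈ s₂, τ₁ < τ₂ →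
      (∀ t ∈ s₂, ¬(τ₁ < t ∧ t < τ₂)) → 1 ≤ ∫ t in τ₁..τ₂, |(x' t).2|) :
    (s₁.card + s₂.card : ℝ) ≤ Real.sqrt 2 * T + 2 := by
  have hIcc : MeasurableSet (Set.Icc (0:ℝ) T) := measurableSet_Icc
  have hderiv_eq : ∀ t ∈ Set.Icc (0:ℝ) T, deriv x t = x' t :=
    fun t ht => (hderiv t ht).deriv
  have hsq : ∀ t ∈ Set.Icc (0:ℝ) T, (x' t).1 ^ 2 + (x' t).2 ^ 2 = 1 :=
    fun t ht => Real.sqrt_eq_one.mp (hunit t ht)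
  have hbound1 : ∀ t ∈ Set.Icc (0:ℝ) T, |(x' t).1| ≤ 1 := by
    intro t ht
    have h := hsq t ht
    nlinarith [sq_abs (x' t).1, sq_abs (x' t).2, abs_nonneg (x' t).1, abs_nonneg (x' t).2,
      sq_nonneg (x' t).2]
  have hbound2 : ∀ t ∈ Set.Icc (0:ℝ) T, |(x' t).2| ≤ 1 := by
    intro t ht
    have h := hsq t ht
    nlinarith [sq_abs (x' t).1, sq_abs (x' t).2, abs_nonneg (x' t).1, abs_nonneg (x' t).2,
      sq_nonneg (x' t).1]
  have hbound : ∀ t ∈ Set.Icc (0:ℝ) T, |(x' t).1| + |(x' t).2| ≤ Real.sqrt 2 := by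
    intro t ht
    have h := hsq t ht
    have h2 : Real.sqrt 2 ^ 2 = 2 := Real.sq_sqrt (by norm_num)
    have h3 : (0:ℝ) ≤ Real.sqrt 2 := Real.sqrt_nonneg 2
    nlinarith [sq_abs (x' t).1, sq_abs (x' t).2, sq_nonneg (|(x' t).1| - |(x' t).2|),
      sq_nonneg (|(x' t).1| + |(x' t).2| - Real.sqrt 2), abs_nonneg (x' t).1,
      abs_nonneg (x' t).2]
  -- integrability of the coordinate speed functions on [0,T]
  have hmeas1 : Measurable fun t => |(deriv x t).1| :=
    (measurable_fst.comp (measurable_deriv x)).abs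
  have hmeas2 : Measurable fun t => |(deriv x t).2| :=
    (measurable_snd.comp (measurable_deriv x)).abs
  have hint1 : MeasureTheory.IntegrableOn (fun t => |(x' t).1|) (Set.Icc 0 T) := by
    refine MeasureTheory.IntegrableOn.congr_fun (f := fun t => |(deriv x t).1|) ?_
      (fun t ht => by simp [hderiv_eq t ht]) hIcc
    refine ⟨hmeas1.aestronglyMeasurable, MeasureTheory.HasFiniteIntegral.of_bounded (C := 1) ?_⟩
    refine ((MeasureTheory.ae_restrict_iff' hIcc).mpr (MeasureTheory.ae_of_all _ ?_))
    intro t ht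
    have := hbound1 t ht
    rw [hderiv_eq t ht] at *
    simpa using this
  have hint2 : MeasureTheory.IntegrableOn (fun t => |(x' t).2|) (Set.Icc 0 T) := by
    refine MeasureTheory.IntegrableOn.congr_fun (f := fun t => |(deriv x t).2|) ?_
      (fun t ht => by simp [hderiv_eq t ht]) hIcc
    refine ⟨hmeas2.aestronglyMeasurable, MeasureTheory.HasFiniteIntegral.of_bounded (C := 1) ?_⟩
    refine ((MeasureTheory.ae_restrict_iff' hIcc).mpr (MeasureTheory.ae_of_all _ ?_))
    intro t ht
    have := hbound2 t ht
    rw [hderiv_eq t ht] at *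
    simpa using this
  have key1 : (s₁.card : ℝ) - 1 ≤ ∫ t in (0:ℝ)..T, |(x' t).1| :=
    key_count (fun t => |(x' t).1|) (fun t => abs_nonneg _) s₁.card s₁ rfl 0 T hT.le
      hint1 hsub₁ hvar₁
  have key2 : (s₂.card : ℝ) - 1 ≤ ∫ t in (0:ℝ)..T, |(x' t).2| :=
    key_count (fun t => |(x' t).2|) (fun t => abs_nonneg _) s₂.card s₂ rfl 0 T hT.le
      hint2 hsub₂ hvar₂
  have II1 : IntervalIntegrable (fun t => |(x' t).1|) MeasureTheory.volume 0 T :=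
    (hint1.mono_set (by rw [Set.uIcc_of_le hT.le])).intervalIntegrable
  have II2 : IntervalIntegrable (fun t => |(x' t).2|) MeasureTheory.volume 0 T :=
    (hint2.mono_set (by rw [Set.uIcc_of_le hT.le])).intervalIntegrable
  have hadd : (∫ t in (0:ℝ)..T, |(x' t).1|) + (∫ t in (0:ℝ)..T, |(x' t).2|)
      = ∫ t in (0:ℝ)..T, (|(x' t).1| + |(x' t).2|) :=
    (intervalIntegral.integral_add II1 II2).symm
  have hmono : (∫ t in (0:ℝ)..T, (|(x' t).1| + |(x' t).2|))
      ≤ ∫ t in (0:ℝ)..T, Real.sqrt 2 :=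
    intervalIntegral.integral_mono_on hT.le (II1.add II2) intervalIntegrable_const hbound
  have hconst : (∫ t in (0:ℝ)..T, Real.sqrt 2) = Real.sqrt 2 * T := by
    simp [mul_comm]
  linarith [key1, key2, hadd ▸ hmono]
end

section
/- Let Γ = P₀P₁⋯P_m be a broken line in ℝ² (parametrized by arc length, total length T) all of whose vertices P_i are points of ℤ² and which avoids the origin. If the total winding of Γ around the origin is at least 2πN (i.e., ∫₀^T ω'(t) dt ≥ 2πN where ω is a continuous determination of the polar angle along Γ), then T ≥ 4√2·N. -/
/-!
Along the segment from a vertex `A` to the next vertex `B` the continuous polar angle can grow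
only when `det(A, B) > 0`, and then by exactly the angle `∠AOB`. For lattice points this angle is
controlled by the length: `2√2 · ∠AOB ≤ π · ‖B - A‖`, with equality for a side of the square
`(1,0), (0,1), (-1,0), (0,-1)`. Summing over the segments, `2√2 · 2πN ≤ 2√2 · (ω T - ω 0) ≤ π T`.
-/

open Set

namespace LatticeWinding

open Real InnerProductGeometry

lemma sub_le_sub_of_forall_mem_Ico {α : Type*} [AddCommGroup α] [PartialOrder α]
    [IsOrderedAddMonoid α] {f g : ℕ → α} {a b : ℕ} (hab : a ≤ b)
    (h : ∀ j ∈ Finset.Ico a b, f (j + 1) - f j ≤ g (j + 1) - g j) : f b - f a ≤ g b - g a := by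
  rw [← Finset.sum_Ico_sub f hab, ← Finset.sum_Ico_sub g hab]
  exact Finset.sum_le_sum h

lemma image_subset_Icc_zero_pi_of_sin_nonneg {X : Type*} [TopologicalSpace X] {S : Set X}
    {f : X → ℝ} {x₀ : X} (hS : IsPreconnected S) (hx₀ : x₀ ∈ S) (hf : ContinuousOn f S)
    (hf₀ : f x₀ = 0) (hsin : ∀ x ∈ S, 0 ≤ sin (f x)) : f '' S ⊆ Icc 0 π := by
  have hI : IsPreconnected (f '' S) := hS.image f hf
  have h0 : (0 : ℝ) ∈ f '' S := ⟨x₀, hx₀, hf₀⟩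
  rintro _ ⟨x, hx, rfl⟩
  by_contra hout
  have hfx := mem_image_of_mem f hx
  obtain ⟨z, hzS, hz⟩ : ∃ z ∈ f '' S, sin z < 0 := by
    rcases not_and_or.1 hout with hneg | hbig
    · refine ⟨max (f x) (-(π / 2)), hI.Icc_subset hfx h0 ⟨le_max_left _ _, ?_⟩, ?_⟩
      · exact max_le (le_of_not_ge hneg) (by linarith [pi_pos])
      · exact sin_neg_of_neg_of_neg_pi_lt (max_lt (lt_of_not_ge hneg) (by linarith [pi_pos]))
          (by linarith [le_max_right (f x) (-(π / 2)), pi_pos])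
    · refine ⟨min (f x) (3 * π / 2), hI.Icc_subset h0 hfx ⟨?_, min_le_left _ _⟩, ?_⟩
      · exact le_min (by linarith [pi_pos, le_of_not_ge hbig]) (by linarith [pi_pos])
      · have := sin_pos_of_pos_of_lt_pi (x := min (f x) (3 * π / 2) - π)
          (by linarith [lt_min (lt_of_not_ge hbig) (by linarith [pi_pos] : π < 3 * π / 2)])
          (by linarith [min_le_right (f x) (3 * π / 2), pi_pos])
        rwa [sin_sub_pi, neg_pos] at this
  obtain ⟨y, hy, rfl⟩ := hzS
  exact (hsin y hy).not_gt hz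

section Angle

variable {V : Type*} [NormedAddCommGroup V] [InnerProductSpace ℝ V] {x y : V}

lemma angle_le_of_cos_mul_le (hx : x ≠ 0) (hy : y ≠ 0) {c : ℝ} (hc₀ : 0 ≤ c) (hcπ : c ≤ π)
    (h : cos c * (‖x‖ * ‖y‖) ≤ inner ℝ x y) : angle x y ≤ c := by
  rw [angle, ← arccos_cos hc₀ hcπ]
  exact arccos_le_arccos ((le_div_iff₀ (by positivity)).2 h)

lemma angle_le_pi_div_four_of (hx : x ≠ 0) (hy : y ≠ 0) (hinner : 0 ≤ inner ℝ x y)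
    (h : ‖x‖ ^ 2 * ‖y‖ ^ 2 ≤ 2 * inner ℝ x y ^ 2) : angle x y ≤ π / 4 := by
  refine angle_le_of_cos_mul_le hx hy (by positivity) (by linarith [pi_pos]) ?_
  rw [cos_pi_div_four]
  nlinarith [sq_sqrt (zero_le_two : (0 : ℝ) ≤ 2), sqrt_nonneg 2, norm_nonneg x, norm_nonneg y]

lemma angle_le_three_pi_div_four_of (hx : x ≠ 0) (hy : y ≠ 0)
    (h : 2 * inner ℝ x y ^ 2 ≤ ‖x‖ ^ 2 * ‖y‖ ^ 2) : angle x y ≤ 3 * π / 4 := by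
  refine angle_le_of_cos_mul_le hx hy (by positivity) (by linarith [pi_pos]) ?_
  rw [show 3 * π / 4 = π - π / 4 by ring, cos_pi_sub, cos_pi_div_four]
  by_contra! hlt
  have hr : 0 ≤ √2 / 2 * (‖x‖ * ‖y‖) := by positivity
  have := sq_lt_sq' (by linarith) (by linarith : √2 / 2 * (‖x‖ * ‖y‖) < -inner ℝ x y)
  nlinarith [sq_sqrt (zero_le_two : (0 : ℝ) ≤ 2)]

end Angle

lemma two_sqrt_two_mul_le_pi_mul {θ L j : ℝ} (hθ : θ ≤ j * (π / 4)) (hL : 0 ≤ L)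
    (hjL : j ^ 2 ≤ 2 * L ^ 2) : 2 * √2 * θ ≤ π * L := by
  have hs : √2 ^ 2 = 2 := sq_sqrt zero_le_two
  have hjL' : j ≤ √2 * L := by
    apply le_of_sq_le_sq _ (by positivity)
    rw [mul_pow, hs]; exact hjL
  calc 2 * √2 * θ ≤ 2 * √2 * (j * (π / 4)) := by gcongr
    _ ≤ 2 * √2 * (√2 * L * (π / 4)) := by gcongr
    _ = π * L := by linear_combination (π * L / 2) * hs

/-- Read `α = ‖A‖²`, `β = ‖B‖²`, `p = ⟪A, B⟫`, `k = det(A, B)` for lattice points `A`, `B`, so that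
`α + β - 2p = ‖B - A‖²`. The `j`-th case bounds `∠AOB` by `jπ/4` and ensures `‖B - A‖² ≥ j²/2`. -/
lemma lattice_angle_cases {α β p k : ℤ} (hα : 0 ≤ α) (hβ : 0 ≤ β) (hk : 0 < k)
    (hlag : α * β = p ^ 2 + k ^ 2) :
    (0 ≤ p ∧ k ^ 2 ≤ p ^ 2 ∧ 1 ≤ α + β - 2 * p) ∨ (0 ≤ p ∧ 2 ≤ α + β - 2 * p) ∨
      (p ^ 2 ≤ k ^ 2 ∧ 5 ≤ α + β - 2 * p) ∨ 8 ≤ α + β - 2 * p := by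
  set L := α + β - 2 * p
  -- `(α - β)² = L² + 4Lp - 4k²`
  have hdisc : 4 * k ^ 2 ≤ L * (L + 4 * p) := by nlinarith [sq_nonneg (α - β)]
  have hk2 : 1 ≤ k ^ 2 := by nlinarith
  have hL1 : 1 ≤ L := by rcases le_or_gt p 0 with hp | hp <;> nlinarith
  rcases le_or_gt 0 p with hp | hp
  · rcases le_or_gt 2 L with h2 | h1
    · exact Or.inr (Or.inl ⟨hp, h2⟩)
    · have hL : L = 1 := by omega
      rw [hL] at hdisc
      refine Or.inl ⟨hp, ?_, hL1⟩
      nlinarith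
  · rcases le_or_gt 8 L with h8 | h7
    · exact Or.inr (Or.inr (Or.inr h8))
    · have h4p : 1 ≤ L + 4 * p := by nlinarith
      have hp1 : p = -1 := by omega
      subst hp1
      exact Or.inr (Or.inr (Or.inl ⟨by nlinarith, by omega⟩))

local notation "ℝ²" => EuclideanSpace ℝ (Fin 2)

def cross (x y : ℝ²) : ℝ := x 0 * y 1 - x 1 * y 0

def HasPolarAngle (v : ℝ²) (θ : ℝ) : Prop :=
  v = ‖v‖ • (WithLp.toLp 2 ![cos θ, sin θ] : ℝ²)

lemma norm_sq_eq (x : ℝ²) : ‖x‖ ^ 2 = x 0 ^ 2 + x 1 ^ 2 := by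
  simp [EuclideanSpace.norm_sq_eq, Fin.sum_univ_two]

lemma inner_eq (x y : ℝ²) : inner ℝ x y = x 0 * y 0 + x 1 * y 1 := by
  simp [EuclideanSpace.inner_eq_star_dotProduct, Fin.sum_univ_two, dotProduct, mul_comm]

lemma cross_one_sub_smul_add_smul (A B : ℝ²) (s : ℝ) :
    cross A ((1 - s) • A + s • B) = s * cross A B := by
  simp only [cross, PiLp.add_apply, PiLp.smul_apply, smul_eq_mul]; ring

namespace HasPolarAngle

variable {v w : ℝ²} {θ η : ℝ}

lemma apply_zero (h : HasPolarAngle v θ) : v 0 = ‖v‖ * cos θ := by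
  conv_lhs => rw [h]
  simp

lemma apply_one (h : HasPolarAngle v θ) : v 1 = ‖v‖ * sin θ := by
  conv_lhs => rw [h]
  simp

lemma inner_eq (hv : HasPolarAngle v θ) (hw : HasPolarAngle w η) :
    inner ℝ v w = ‖v‖ * ‖w‖ * cos (η - θ) := by
  rw [LatticeWinding.inner_eq, hv.apply_zero, hv.apply_one, hw.apply_zero, hw.apply_one, cos_sub]
  ring

lemma cross_eq (hv : HasPolarAngle v θ) (hw : HasPolarAngle w η) :
    cross v w = ‖v‖ * ‖w‖ * sin (η - θ) := by
  rw [cross, hv.apply_zero, hv.apply_one, hw.apply_zero, hw.apply_one, sin_sub]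
  ring

end HasPolarAngle

lemma segment_lift_sub_nonpos_or_eq_angle {A B : ℝ²} {φ : ℝ → ℝ}
    (hφ : ContinuousOn φ (Icc 0 1)) (hne : ∀ s ∈ Icc (0 : ℝ) 1, (1 - s) • A + s • B ≠ 0)
    (hpolar : ∀ s ∈ Icc (0 : ℝ) 1, HasPolarAngle ((1 - s) • A + s • B) (φ s)) :
    φ 1 - φ 0 ≤ 0 ∨ (0 < cross A B ∧ φ 1 - φ 0 = angle A B) := by
  have h0 : (0 : ℝ) ∈ Icc (0 : ℝ) 1 := left_mem_Icc.2 zero_le_one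
  have h1 : (1 : ℝ) ∈ Icc (0 : ℝ) 1 := right_mem_Icc.2 zero_le_one
  have hA : HasPolarAngle A (φ 0) := by simpa using hpolar 0 h0
  have hB : HasPolarAngle B (φ 1) := by simpa using hpolar 1 h1
  have hpos : ∀ s ∈ Icc (0 : ℝ) 1, 0 < ‖A‖ * ‖(1 - s) • A + s • B‖ := fun s hs =>
    mul_pos (norm_pos_iff.2 (by simpa using hne 0 h0)) (norm_pos_iff.2 (hne s hs))
  -- `sin (φ s - φ 0)` has the sign of `det(A, B)`, which traps `φ s - φ 0` in `[0, π]` or `[-π, 0]`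
  have hsin : ∀ s ∈ Icc (0 : ℝ) 1,
      ‖A‖ * ‖(1 - s) • A + s • B‖ * sin (φ s - φ 0) = s * cross A B := fun s hs => by
    rw [← hA.cross_eq (hpolar s hs), cross_one_sub_smul_add_smul]
  rcases le_or_gt (cross A B) 0 with hk | hk
  · left
    have hrange := image_subset_Icc_zero_pi_of_sin_nonneg (f := fun s => φ 0 - φ s)
      isPreconnected_Icc h0 (continuousOn_const.sub hφ) (sub_self _) fun s hs => by
        rw [← mul_nonneg_iff_of_pos_left (hpos s hs), ← neg_sub (φ s), sin_neg, mul_neg, hsin s hs]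
        exact neg_nonneg.2 (mul_nonpos_of_nonneg_of_nonpos hs.1 hk)
    linarith [(hrange (mem_image_of_mem _ h1)).1]
  · right
    have hrange := image_subset_Icc_zero_pi_of_sin_nonneg (f := fun s => φ s - φ 0)
      isPreconnected_Icc h0 (hφ.sub continuousOn_const) (sub_self _) fun s hs => by
        rw [← mul_nonneg_iff_of_pos_left (hpos s hs), hsin s hs]
        exact mul_nonneg hs.1 hk.le
    obtain ⟨hlo, hhi⟩ := hrange (mem_image_of_mem _ h1)
    have hAB : 0 < ‖A‖ * ‖B‖ := by simpa using hpos 1 h1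
    refine ⟨hk, ?_⟩
    rw [angle, hA.inner_eq hB, mul_div_cancel_left₀ _ hAB.ne', arccos_cos hlo hhi]

lemma two_sqrt_two_mul_angle_le_of_lattice {A B : ℝ²}
    (hA : ∃ a b : ℤ, A = ![(a : ℝ), (b : ℝ)]) (hB : ∃ a b : ℤ, B = ![(a : ℝ), (b : ℝ)])
    (hk : 0 < cross A B) : 2 * √2 * angle A B ≤ π * ‖B - A‖ := by
  obtain ⟨a₀, a₁, hA⟩ := hA
  obtain ⟨b₀, b₁, hB⟩ := hB
  have hA₀ : A 0 = a₀ := by rw [hA]; rfl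
  have hA₁ : A 1 = a₁ := by rw [hA]; rfl
  have hB₀ : B 0 = b₀ := by rw [hB]; rfl
  have hB₁ : B 1 = b₁ := by rw [hB]; rfl
  have hAne : A ≠ 0 := by rintro rfl; simp [cross] at hk
  have hBne : B ≠ 0 := by rintro rfl; simp [cross] at hk
  have hnA : ‖A‖ ^ 2 = ((a₀ ^ 2 + a₁ ^ 2 : ℤ) : ℝ) := by rw [norm_sq_eq, hA₀, hA₁]; push_cast; ring
  have hnB : ‖B‖ ^ 2 = ((b₀ ^ 2 + b₁ ^ 2 : ℤ) : ℝ) := by rw [norm_sq_eq, hB₀, hB₁]; push_cast; ring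
  have hp : inner ℝ A B = ((a₀ * b₀ + a₁ * b₁ : ℤ) : ℝ) := by
    rw [inner_eq, hA₀, hA₁, hB₀, hB₁]; push_cast; ring
  have hkZ : cross A B = ((a₀ * b₁ - a₁ * b₀ : ℤ) : ℝ) := by
    rw [cross, hA₀, hA₁, hB₀, hB₁]; push_cast; ring
  have hL : ‖B - A‖ ^ 2 = ‖A‖ ^ 2 + ‖B‖ ^ 2 - 2 * inner ℝ A B := by
    rw [norm_sub_sq_real, real_inner_comm]; ring
  have hlag : (a₀ ^ 2 + a₁ ^ 2) * (b₀ ^ 2 + b₁ ^ 2) =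
      (a₀ * b₀ + a₁ * b₁) ^ 2 + (a₀ * b₁ - a₁ * b₀) ^ 2 := by ring
  rw [hkZ] at hk
  generalize a₀ ^ 2 + a₁ ^ 2 = α at hnA hlag
  generalize b₀ ^ 2 + b₁ ^ 2 = β at hnB hlag
  generalize a₀ * b₀ + a₁ * b₁ = p at hp hlag
  generalize a₀ * b₁ - a₁ * b₀ = k at hk hlag
  have hα : 0 ≤ α := by exact_mod_cast hnA ▸ sq_nonneg ‖A‖
  have hβ : 0 ≤ β := by exact_mod_cast hnB ▸ sq_nonneg ‖B‖
  have hLR : ‖B - A‖ ^ 2 = (α : ℝ) + β - 2 * p := by rw [hL, hnA, hnB, hp]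
  have hr : ‖A‖ ^ 2 * ‖B‖ ^ 2 = (p : ℝ) ^ 2 + (k : ℝ) ^ 2 := by
    rw [hnA, hnB]; exact_mod_cast hlag
  rcases lattice_angle_cases hα hβ (by exact_mod_cast hk) hlag with
    ⟨hp₀, hkp, hL₁⟩ | ⟨hp₀, hL₂⟩ | ⟨hpk, hL₅⟩ | hL₈ <;> rify at *
  · have hθ := angle_le_pi_div_four_of hAne hBne (hp ▸ hp₀) (by rw [hr, hp]; linarith)
    exact two_sqrt_two_mul_le_pi_mul (j := 1) (by linarith) (norm_nonneg _) (by linarith)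
  · have hθ : angle A B ≤ π / 2 :=
      arccos_le_pi_div_two.2 (div_nonneg (hp ▸ hp₀) (by positivity))
    exact two_sqrt_two_mul_le_pi_mul (j := 2) (by linarith) (norm_nonneg _) (by linarith)
  · have hθ := angle_le_three_pi_div_four_of hAne hBne (by rw [hr, hp]; linarith)
    exact two_sqrt_two_mul_le_pi_mul (j := 3) (by linarith) (norm_nonneg _) (by linarith)
  · have hθ := angle_le_pi A B
    exact two_sqrt_two_mul_le_pi_mul (j := 4) (by linarith) (norm_nonneg _) (by linarith)

lemma two_sqrt_two_mul_sub_le_of_segment {A B : ℝ²}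
    (hA : ∃ a b : ℤ, A = ![(a : ℝ), (b : ℝ)]) (hB : ∃ a b : ℤ, B = ![(a : ℝ), (b : ℝ)])
    {γ : ℝ → ℝ²} {ω : ℝ → ℝ} {t₀ t₁ : ℝ} (ht : t₀ ≤ t₁)
    (hlin : ∀ s ∈ Icc (0 : ℝ) 1, γ ((1 - s) * t₀ + s * t₁) = (1 - s) • A + s • B)
    (hne : ∀ t ∈ Icc t₀ t₁, γ t ≠ 0) (hω : ContinuousOn ω (Icc t₀ t₁))
    (hpolar : ∀ t ∈ Icc t₀ t₁, HasPolarAngle (γ t) (ω t)) :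
    2 * √2 * (ω t₁ - ω t₀) ≤ π * ‖B - A‖ := by
  have hmem : ∀ s ∈ Icc (0 : ℝ) 1, (1 - s) * t₀ + s * t₁ ∈ Icc t₀ t₁ := fun s hs => by
    constructor <;> nlinarith [hs.1, hs.2]
  rcases segment_lift_sub_nonpos_or_eq_angle (φ := fun s => ω ((1 - s) * t₀ + s * t₁))
      (hω.comp (by fun_prop) hmem) (fun s hs => hlin s hs ▸ hne _ (hmem s hs))
      (fun s hs => hlin s hs ▸ hpolar _ (hmem s hs)) with h | ⟨hk, h⟩
  · have : 2 * √2 * (ω t₁ - ω t₀) ≤ 0 :=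
      mul_nonpos_of_nonneg_of_nonpos (by positivity) (by simpa using h)
    linarith [mul_nonneg pi_pos.le (norm_nonneg (B - A))]
  · simp only [sub_zero, zero_mul, one_mul, zero_add, add_zero, sub_self] at h
    rw [h]
    exact two_sqrt_two_mul_angle_le_of_lattice hA hB hk

end LatticeWinding

open LatticeWinding Real in
theorem stmt11_general (m : ℕ) (N : ℕ) (T : ℝ)
    (P : ℕ → EuclideanSpace ℝ (Fin 2))
    (hlat : ∀ j ≤ m, ∃ a b : ℤ, P j = ![(a : ℝ), (b : ℝ)])
    (τ : ℕ → ℝ) (hτ0 : τ 0 = 0) (hτm : τ m = T)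
    (harc : ∀ j < m, τ (j + 1) - τ j = ‖P (j + 1) - P j‖)
    (γ : ℝ → EuclideanSpace ℝ (Fin 2))
    (hlin : ∀ j < m, ∀ s ∈ Set.Icc (0 : ℝ) 1,
      γ ((1 - s) * τ j + s * τ (j + 1)) = (1 - s) • P j + s • P (j + 1))
    (hne : ∀ t ∈ Set.Icc (0 : ℝ) T, γ t ≠ 0)
    (ω : ℝ → ℝ) (hω : ContinuousOn ω (Set.Icc 0 T))
    (hangle : ∀ t ∈ Set.Icc (0 : ℝ) T,
      γ t = ‖γ t‖ • (WithLp.toLp 2 ![Real.cos (ω t), Real.sin (ω t)] : EuclideanSpace ℝ (Fin 2)))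
    (hwind : 2 * Real.pi * N ≤ ω T - ω 0) :
    4 * Real.sqrt 2 * N ≤ T := by
  have hstep : ∀ j < m, τ j ≤ τ (j + 1) := fun j hj => sub_nonneg.1 (harc j hj ▸ norm_nonneg _)
  have hτ_mono : MonotoneOn τ (Iic m) := monotoneOn_of_le_succ ordConnected_Iic
    fun j _ _ hj => hstep j (Order.succ_le_iff.1 hj)
  have hτ : ∀ j ≤ m, τ j ∈ Icc 0 T := fun j hj =>
    ⟨hτ0 ▸ hτ_mono (Nat.zero_le m) hj (Nat.zero_le j), hτm ▸ hτ_mono hj (mem_Iic.2 le_rfl) hj⟩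
  have hseg : ∀ j ∈ Finset.Ico 0 m,
      2 * √2 * ω (τ (j + 1)) - 2 * √2 * ω (τ j) ≤ π * τ (j + 1) - π * τ j := by
    intro j hj
    obtain ⟨-, hj⟩ := Finset.mem_Ico.1 hj
    have hsub : Icc (τ j) (τ (j + 1)) ⊆ Icc 0 T := Icc_subset_Icc (hτ j hj.le).1 (hτ (j + 1) hj).2
    have := two_sqrt_two_mul_sub_le_of_segment (hlat j hj.le) (hlat (j + 1) hj) (hstep j hj)
      (hlin j hj) (fun t ht => hne t (hsub ht)) (hω.mono hsub) (fun t ht => hangle t (hsub ht))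
    rwa [← harc j hj, mul_sub, mul_sub] at this
  have hsum := sub_le_sub_of_forall_mem_Ico (f := fun j => 2 * √2 * ω (τ j))
    (g := fun j => π * τ j) (Nat.zero_le m) hseg
  rw [hτ0, hτm, ← mul_sub, mul_zero, sub_zero] at hsum
  have : π * (4 * √2 * N) ≤ π * T := calc
    π * (4 * √2 * N) = 2 * √2 * (2 * π * N) := by ring
    _ ≤ 2 * √2 * (ω T - ω 0) := by gcongr
    _ ≤ π * T := hsum
  exact le_of_mul_le_mul_left this pi_pos

/-- A broken line `Γ` with integer vertices, parametrized by arc length on `[0,T]`,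
avoiding the origin, whose continuous polar angle increases by at least `2πN`,
has length `T ≥ 4√2·N`. -/
theorem stmt11 (m : ℕ) (N : ℕ) (T : ℝ) (hT : 0 < T)
    (P : ℕ → EuclideanSpace ℝ (Fin 2))
    (hlat : ∀ j ≤ m, ∃ a b : ℤ, P j = ![(a : ℝ), (b : ℝ)])
    (τ : ℕ → ℝ) (hτ0 : τ 0 = 0) (hτm : τ m = T)
    (hmono : ∀ j < m, τ j ≤ τ (j + 1))
    (harc : ∀ j < m, τ (j + 1) - τ j = ‖P (j + 1) - P j‖)
    (γ : ℝ → EuclideanSpace ℝ (Fin 2))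
    (hlin : ∀ j < m, ∀ s ∈ Set.Icc (0 : ℝ) 1,
      γ ((1 - s) * τ j + s * τ (j + 1)) = (1 - s) • P j + s • P (j + 1))
    (hne : ∀ t ∈ Set.Icc (0 : ℝ) T, γ t ≠ 0)
    (ω : ℝ → ℝ) (hω : ContinuousOn ω (Set.Icc 0 T))
    (hangle : ∀ t ∈ Set.Icc (0 : ℝ) T,
      γ t = ‖γ t‖ • (WithLp.toLp 2 ![Real.cos (ω t), Real.sin (ω t)] : EuclideanSpace ℝ (Fin 2)))
    (hwind : 2 * Real.pi * N ≤ ω T - ω 0) :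
    4 * Real.sqrt 2 * N ≤ T :=
  stmt11_general m N T P hlat τ hτ0 hτm harc γ hlin hne ω hω hangle hwind
end
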